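/- Let T be a symmetric contraction on a closed subspace dom(T) of a complex Hilbert space H, with representation T = [A; Γ₂D_A] as above. For any two selfadjoint contractions Γ′, Γ″ ∈ 𝒞(T), one has ‖T̃(Γ′) − T̃(Γ″)‖ = ‖D_{Γ₂*}(Γ′ − Γ″)D_{Γ₂*}‖, the map Γ ↦ T̃(Γ) is continuous in operator norm, and Γ′ ≤ Γ″ if and only if T̃(Γ′) ≤ T̃(Γ″). -/

import Mathlib

open scoped InnerProductSpace ComplexOrder
open Filter Topology

noncomputable section

/-- The defect operator `D_C = (I - C*C)^{1/2}` of a bounded operator `C` between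
complex Hilbert spaces. -/
def defectOp {E F : Type*} [NormedAddCommGroup E] [InnerProductSpace ℂ E] [CompleteSpace E]
    [NormedAddCommGroup F] [InnerProductSpace ℂ F] [CompleteSpace F] (C : E →L[ℂ] F) :
    E →L[ℂ] E :=
  CFC.sqrt (1 - ContinuousLinearMap.adjoint C ∘L C)

/-- The defect space `𝒟_C`: the closure of the range of the defect operator `D_C`. -/
def defectSpace {E F : Type*} [NormedAddCommGroup E] [InnerProductSpace ℂ E] [CompleteSpace E]
    [NormedAddCommGroup F] [InnerProductSpace ℂ F] [CompleteSpace F] (C : E →L[ℂ] F) :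
    Submodule ℂ E :=
  (LinearMap.range (defectOp C : E →ₗ[ℂ] E)).topologicalClosure

/-- The defect operator `D_{Γ₂*}` of the adjoint of `Γ₂`. -/
def defectOpAdjoint {H : Type*} [NormedAddCommGroup H] [InnerProductSpace ℂ H] [CompleteSpace H]
    (D : Submodule ℂ H) [CompleteSpace D] (Γ₂ : D →L[ℂ] ↥Dᗮ) : ↥Dᗮ →L[ℂ] ↥Dᗮ :=
  haveI : CompleteSpace ↥Dᗮ := (Submodule.isClosed_orthogonal D).completeSpace_coe
  defectOp (ContinuousLinearMap.adjoint Γ₂)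

/-- The defect space `𝒟_{Γ₂*}` of the adjoint of `Γ₂`. -/
def defectSpaceAdjoint {H : Type*} [NormedAddCommGroup H] [InnerProductSpace ℂ H]
    [CompleteSpace H] (D : Submodule ℂ H) [CompleteSpace D] (Γ₂ : D →L[ℂ] ↥Dᗮ) :
    Submodule ℂ ↥Dᗮ :=
  (LinearMap.range (defectOpAdjoint D Γ₂ : ↥Dᗮ →ₗ[ℂ] ↥Dᗮ)).topologicalClosure

/-- The orthogonal projection of `Dᗮ` onto the defect space `𝒟_{Γ₂*}`; it encodes the identity
operator of `𝒟_{Γ₂*}` as an operator on `Dᗮ`. -/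
def defectProjAdjoint {H : Type*} [NormedAddCommGroup H] [InnerProductSpace ℂ H]
    [CompleteSpace H] (D : Submodule ℂ H) [CompleteSpace D] (Γ₂ : D →L[ℂ] ↥Dᗮ) :
    ↥Dᗮ →L[ℂ] ↥Dᗮ :=
  haveI : CompleteSpace ↥Dᗮ := (Submodule.isClosed_orthogonal D).completeSpace_coe
  haveI : CompleteSpace ↥(defectSpaceAdjoint D Γ₂) :=
    (Submodule.isClosed_topologicalClosure _).completeSpace_coe
  (defectSpaceAdjoint D Γ₂).subtypeL ∘L Submodule.orthogonalProjectionOnto (defectSpaceAdjoint D Γ₂)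

/-- The set `𝒞(T)` of all selfadjoint contractions of the defect space `𝒟_{Γ₂*}`, encoded as
operators on `Dᗮ` vanishing on the orthogonal complement of `𝒟_{Γ₂*}` and with range
contained in `𝒟_{Γ₂*}`. -/
def CSet {H : Type*} [NormedAddCommGroup H] [InnerProductSpace ℂ H] [CompleteSpace H]
    (D : Submodule ℂ H) [CompleteSpace D] (Γ₂ : D →L[ℂ] ↥Dᗮ) : Set (↥Dᗮ →L[ℂ] ↥Dᗮ) :=
  haveI : CompleteSpace ↥Dᗮ := (Submodule.isClosed_orthogonal D).completeSpace_coe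
  {Γ | IsSelfAdjoint Γ ∧ ‖Γ‖ ≤ 1 ∧ LinearMap.range (Γ : ↥Dᗮ →ₗ[ℂ] ↥Dᗮ) ≤ defectSpaceAdjoint D Γ₂ ∧
    (defectSpaceAdjoint D Γ₂)ᗮ ≤ LinearMap.ker (Γ : ↥Dᗮ →ₗ[ℂ] ↥Dᗮ)}

/-- The selfadjoint contraction `T̃(Γ) = [[A, D_A Γ₂*], [Γ₂ D_A, -Γ₂ A* Γ₂* + D_{Γ₂*} Γ D_{Γ₂*}]]`
with respect to the decomposition `H = D ⊕ Dᗮ`. -/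
def tildeT {H : Type*} [NormedAddCommGroup H] [InnerProductSpace ℂ H] [CompleteSpace H]
    (D : Submodule ℂ H) [CompleteSpace D] (A : D →L[ℂ] D) (Γ₂ : D →L[ℂ] ↥Dᗮ)
    (Γ : ↥Dᗮ →L[ℂ] ↥Dᗮ) : H →L[ℂ] H :=
  haveI : CompleteSpace ↥Dᗮ := (Submodule.isClosed_orthogonal D).completeSpace_coe
  D.subtypeL ∘L (A ∘L Submodule.orthogonalProjectionOnto D +
      defectOp A ∘L ContinuousLinearMap.adjoint Γ₂ ∘L Submodule.orthogonalProjectionOnto Dᗮ) +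
    Dᗮ.subtypeL ∘L (Γ₂ ∘L defectOp A ∘L Submodule.orthogonalProjectionOnto D +
      (-(Γ₂ ∘L ContinuousLinearMap.adjoint A ∘L ContinuousLinearMap.adjoint Γ₂) +
          defectOpAdjoint D Γ₂ ∘L Γ ∘L defectOpAdjoint D Γ₂) ∘L Submodule.orthogonalProjectionOnto Dᗮ)

/-!
`T̃(Γ')` and `T̃(Γ'')` differ only in the lower right corner:
`T̃(Γ') - T̃(Γ'') = ι Δ (Γ' - Γ'') Δ ι*` with `Δ = D_{Γ₂*}` and `ι : H ⊖ dom(T) → H` the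
inclusion. As `ι` is an isometry this gives the norm identity, and continuity follows since
`Γ ↦ T̃(Γ)` is affine. For the order, compression by `ι` preserves and reflects positivity;
`Δ (Γ'' - Γ') Δ ≥ 0` says that `Γ'' - Γ'` is nonnegative on the range of `Δ`, hence on its
closure `𝒟_{Γ₂*}`, and the selfadjoint operator `Γ'' - Γ'` vanishes on `𝒟_{Γ₂*}ᗮ`.
-/

open scoped InnerProduct

namespace ContinuousLinearMap

section Complex

variable {E : Type*} [NormedAddCommGroup E] [InnerProductSpace ℂ E]

theorem isPositive_iff_forall_inner_nonneg (T : E →L[ℂ] E) :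
    T.IsPositive ↔ ∀ x, 0 ≤ ⟪T x, x⟫_ℂ := by
  -- in `ComplexOrder`, `0 ≤ z` includes `z.im = 0`, which is what yields symmetry
  refine (isPositive_iff_complex T).trans (forall_congr' fun x => ?_)
  rw [RCLike.nonneg_iff (z := ⟪T x, x⟫_ℂ)]
  simp [Complex.ext_iff, eq_comm, and_comm]

end Complex

variable {𝕜 E F : Type*} [RCLike 𝕜] [NormedAddCommGroup E] [InnerProductSpace 𝕜 E]
  [NormedAddCommGroup F] [InnerProductSpace 𝕜 F]

theorem norm_subtypeL_comp_comp_orthogonalProjectionOnto (K : Submodule 𝕜 E)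
    [K.HasOrthogonalProjection] (X : K →L[𝕜] K) :
    ‖K.subtypeL ∘L X ∘L K.orthogonalProjectionOnto‖ = ‖X‖ := by
  refine le_antisymm ?_ ?_
  · calc _ ≤ ‖K.subtypeL‖ * (‖X‖ * ‖K.orthogonalProjectionOnto‖) := by
          grw [opNorm_comp_le, opNorm_comp_le]
      _ ≤ 1 * (‖X‖ * 1) := by
          gcongr
          exacts [Submodule.norm_subtypeL_le K, K.orthogonalProjectionOnto_norm_le]
      _ = ‖X‖ := by ring
  · refine X.opNorm_le_bound (norm_nonneg _) fun x => ?_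
    simpa [Submodule.orthogonalProjectionOnto_mem_subspace_eq_self] using
      (K.subtypeL ∘L X ∘L K.orthogonalProjectionOnto).le_opNorm (x : E)

variable [CompleteSpace E] [CompleteSpace F]

theorem isPositive_subtypeL_comp_comp_orthogonalProjectionOnto_iff (K : Submodule 𝕜 E)
    [CompleteSpace K] (X : K →L[𝕜] K) :
    (K.subtypeL ∘L X ∘L K.orthogonalProjectionOnto).IsPositive ↔ X.IsPositive := by
  refine ⟨fun h => ?_, fun h => ?_⟩
  · have hX : X = K.orthogonalProjectionOnto ∘L (K.subtypeL ∘L X ∘L K.orthogonalProjectionOnto) ∘L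
        K.subtypeL := by
      ext x
      simp [Submodule.orthogonalProjectionOnto_mem_subspace_eq_self]
    have := h.conj_adjoint K.orthogonalProjectionOnto
    rwa [K.adjoint_orthogonalProjectionOnto, ← hX] at this
  · simpa [K.adjoint_subtypeL] using h.conj_adjoint K.subtypeL

theorem IsPositive.of_adjoint_conj {B : E →L[𝕜] E} (hB : IsSelfAdjoint B) {V : F →L[𝕜] E}
    (hker : (LinearMap.range (V : F →ₗ[𝕜] E))ᗮ ≤ LinearMap.ker (B : E →ₗ[𝕜] E))
    (h : (V† ∘L B ∘L V).IsPositive) :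
    B.IsPositive := by
  set K := (LinearMap.range (V : F →ₗ[𝕜] E)).topologicalClosure
  have hsymm : ∀ x y, ⟪B x, y⟫_𝕜 = ⟪x, B y⟫_𝕜 := hB.isSymmetric
  have hrange : ∀ ζ, 0 ≤ ⟪B (V ζ), V ζ⟫_𝕜 := fun ζ => by
    simpa [adjoint_inner_left] using h.inner_nonneg_left ζ
  have hK : ∀ y ∈ K, 0 ≤ ⟪B y, y⟫_𝕜 := by
    have hclosed : IsClosed {y | 0 ≤ ⟪B y, y⟫_𝕜} := isClosed_le continuous_const (by fun_prop)
    exact fun y hy => closure_minimal (by rintro _ ⟨ζ, rfl⟩; exact hrange ζ) hclosed hy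
  refine (isPositive_iff' B).mpr ⟨hB, fun x => ?_⟩
  set p := K.starProjection x
  have hBx : B x = B p := by
    have hx : x - p ∈ Kᗮ := K.sub_starProjection_mem_orthogonal x
    rw [Submodule.orthogonal_closure] at hx
    simpa [sub_eq_zero] using hker hx
  calc 0 ≤ ⟪B p, p⟫_𝕜 := hK p (K.starProjection_apply_mem x)
    _ = ⟪B x, x⟫_𝕜 := by rw [hsymm, ← hBx, ← hsymm, hBx]

end ContinuousLinearMap

open ContinuousLinearMap

theorem isSelfAdjoint_defectOp {E F : Type*} [NormedAddCommGroup E] [InnerProductSpace ℂ E]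
    [CompleteSpace E] [NormedAddCommGroup F] [InnerProductSpace ℂ F] [CompleteSpace F]
    (C : E →L[ℂ] F) : IsSelfAdjoint (defectOp C) :=
  IsSelfAdjoint.of_nonneg (CFC.sqrt_nonneg _)

section tildeT

variable {H : Type*} [NormedAddCommGroup H] [InnerProductSpace ℂ H] [CompleteSpace H]
  (D : Submodule ℂ H) [CompleteSpace D] (A : D →L[ℂ] D) (Γ₂ : D →L[ℂ] ↥Dᗮ)

theorem isSelfAdjoint_defectOpAdjoint : IsSelfAdjoint (defectOpAdjoint D Γ₂) :=
  isSelfAdjoint_defectOp _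

theorem tildeT_sub_tildeT (Γ' Γ'' : ↥Dᗮ →L[ℂ] ↥Dᗮ) :
    tildeT D A Γ₂ Γ' - tildeT D A Γ₂ Γ'' =
      Dᗮ.subtypeL ∘L (defectOpAdjoint D Γ₂ ∘L (Γ' - Γ'') ∘L defectOpAdjoint D Γ₂) ∘L
        Dᗮ.orthogonalProjectionOnto := by
  ext ξ
  simp only [tildeT, sub_apply, add_apply, comp_apply, neg_apply, Submodule.subtypeL_apply,
    map_sub, Submodule.coe_add, Submodule.coe_neg]
  abel

theorem norm_tildeT_sub_tildeT (Γ' Γ'' : ↥Dᗮ →L[ℂ] ↥Dᗮ) :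
    ‖tildeT D A Γ₂ Γ' - tildeT D A Γ₂ Γ''‖ =
      ‖defectOpAdjoint D Γ₂ ∘L (Γ' - Γ'') ∘L defectOpAdjoint D Γ₂‖ := by
  rw [tildeT_sub_tildeT, norm_subtypeL_comp_comp_orthogonalProjectionOnto]

theorem continuous_tildeT : Continuous (tildeT D A Γ₂) := by
  have h : tildeT D A Γ₂ = fun Γ => tildeT D A Γ₂ 0 +
      Dᗮ.subtypeL ∘L (defectOpAdjoint D Γ₂ ∘L Γ ∘L defectOpAdjoint D Γ₂) ∘L
        Dᗮ.orthogonalProjectionOnto := by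
    ext1 Γ
    rw [← sub_eq_iff_eq_add', tildeT_sub_tildeT, sub_zero]
  rw [h]
  fun_prop

variable {D A Γ₂} in
theorem tildeT_le_tildeT_iff {Γ' Γ'' : ↥Dᗮ →L[ℂ] ↥Dᗮ} (hΓ' : Γ' ∈ CSet D Γ₂)
    (hΓ'' : Γ'' ∈ CSet D Γ₂) : tildeT D A Γ₂ Γ' ≤ tildeT D A Γ₂ Γ'' ↔ Γ' ≤ Γ'' := by
  have hdop := (isSelfAdjoint_defectOpAdjoint D Γ₂).adjoint_eq
  have hker : (LinearMap.range (defectOpAdjoint D Γ₂ : ↥Dᗮ →ₗ[ℂ] ↥Dᗮ))ᗮ ≤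
      LinearMap.ker ((Γ'' - Γ' : ↥Dᗮ →L[ℂ] ↥Dᗮ) : ↥Dᗮ →ₗ[ℂ] ↥Dᗮ) := by
    intro η hη
    replace hη : η ∈ (defectSpaceAdjoint D Γ₂)ᗮ := by
      rwa [defectSpaceAdjoint, Submodule.orthogonal_closure]
    have h' : Γ' η = 0 := hΓ'.2.2.2 hη
    have h'' : Γ'' η = 0 := hΓ''.2.2.2 hη
    simp [h', h'']
  rw [ContinuousLinearMap.le_def, ContinuousLinearMap.le_def, tildeT_sub_tildeT,
    isPositive_subtypeL_comp_comp_orthogonalProjectionOnto_iff]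
  refine ⟨fun h => IsPositive.of_adjoint_conj (hΓ''.1.sub hΓ'.1) hker (by rwa [hdop]),
    fun h => by simpa [hdop] using h.adjoint_conj (defectOpAdjoint D Γ₂)⟩

end tildeT

variable {H : Type*} [NormedAddCommGroup H] [InnerProductSpace ℂ H] [CompleteSpace H]

theorem statement15 (D : Submodule ℂ H) [CompleteSpace D] (A : D →L[ℂ] D)
    (Γ₂ : D →L[ℂ] ↥Dᗮ) :
    (∀ Γ' ∈ CSet D Γ₂, ∀ Γ'' ∈ CSet D Γ₂,
      ‖tildeT D A Γ₂ Γ' - tildeT D A Γ₂ Γ''‖ =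
        ‖defectOpAdjoint D Γ₂ ∘L (Γ' - Γ'') ∘L defectOpAdjoint D Γ₂‖) ∧
    ContinuousOn (fun Γ => tildeT D A Γ₂ Γ) (CSet D Γ₂) ∧
    (∀ Γ' ∈ CSet D Γ₂, ∀ Γ'' ∈ CSet D Γ₂,
      ((∀ η : ↥Dᗮ, 0 ≤ ⟪(Γ'' - Γ') η, η⟫_ℂ) ↔
        ∀ ξ : H, 0 ≤ ⟪(tildeT D A Γ₂ Γ'' - tildeT D A Γ₂ Γ') ξ, ξ⟫_ℂ)) := by
  refine ⟨fun Γ' _ Γ'' _ => norm_tildeT_sub_tildeT D A Γ₂ Γ' Γ'',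
    (continuous_tildeT D A Γ₂).continuousOn, fun Γ' hΓ' Γ'' hΓ'' => ?_⟩
  rw [← isPositive_iff_forall_inner_nonneg, ← isPositive_iff_forall_inner_nonneg,
    ← ContinuousLinearMap.le_def, ← ContinuousLinearMap.le_def, tildeT_le_tildeT_iff hΓ' hΓ'']
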